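/- Every strongly proper forcing is strongly stationary set preserving. -/

import Mathlib

noncomputable section

namespace CcPaper

/-! ### First-order logic over the membership relation -/

/-- First-order formulas in the language of set theory with `n` free variables. -/
inductive Fml : ℕ → Type
  | mem : ∀ {n}, Fin n → Fin n → Fml n
  | eq : ∀ {n}, Fin n → Fin n → Fml n
  | not : ∀ {n}, Fml n → Fml n
  | and : ∀ {n}, Fml n → Fml n → Fml n
  | ex : ∀ {n}, Fml (n + 1) → Fml n

/-- Satisfaction of a formula in a class `D` of ZF-sets, quantifiers relativized to `D`. -/
def Sat (D : Set ZFSet.{0}) : ∀ {n}, Fml n → (Fin n → ZFSet.{0}) → Prop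
  | _, .mem i j, v => v i ∈ v j
  | _, .eq i j, v => v i = v j
  | _, .not φ, v => ¬ Sat D φ v
  | _, .and φ ψ, v => Sat D φ v ∧ Sat D ψ v
  | _, .ex φ, v => ∃ x ∈ D, Sat D φ (Fin.snoc v x)

/-- `M` is an elementary substructure of the class `H` (w.r.t. `∈`). -/
def ElemSub (M H : Set ZFSet.{0}) : Prop :=
  M ⊆ H ∧ ∀ {n : ℕ} (φ : Fml n) (v : Fin n → ZFSet.{0}), (∀ i, v i ∈ M) →
    (Sat M φ v ↔ Sat H φ v)

/-- A transitive class. -/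
def TransClass (H : Set ZFSet.{0}) : Prop := ∀ x ∈ H, ∀ y ∈ x, y ∈ H

/-! ### Ordinals, ω₁, functions, hulls -/

/-- `x` is a (von Neumann) ordinal. -/
def IsOrd (x : ZFSet.{0}) : Prop := x.IsTransitive ∧ ∀ y ∈ x, ZFSet.IsTransitive y

/-- `o` is the first uncountable ordinal. -/
def IsOmega1 (o : ZFSet.{0}) : Prop :=
  IsOrd o ∧ ¬ o.toSet.Countable ∧ ∀ β ∈ o.toSet, β.toSet.Countable

/-- `f` is a (set-)function, i.e. a single-valued set of Kuratowski pairs. -/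
def IsFun (f : ZFSet.{0}) : Prop :=
  (∀ z ∈ f, ∃ a b, z = ZFSet.pair a b) ∧
    ∀ a b b', ZFSet.pair a b ∈ f → ZFSet.pair a b' ∈ f → b = b'

/-- `x` belongs to the domain of `f`. -/
def domMem (f x : ZFSet.{0}) : Prop := ∃ y, ZFSet.pair x y ∈ f

/-- `f` is a function with domain `d`. -/
def FunOn (f d : ZFSet.{0}) : Prop := IsFun f ∧ ∀ x, domMem f x ↔ x ∈ d

/-- `Hull M x = { f(x) : f ∈ M, x ∈ dom f }`. -/
def Hull (M : Set ZFSet.{0}) (x : ZFSet.{0}) : Set ZFSet.{0} :=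
  {y | ∃ f ∈ M, IsFun f ∧ ZFSet.pair x y ∈ f}

/-- `x ∥_{ω₁} M` : `Hull M x` and `M` contain the same elements of `ω₁`. -/
def ParallelO (ω1 x : ZFSet.{0}) (M : Set ZFSet.{0}) : Prop :=
  ∀ z ∈ ω1.toSet, (z ∈ Hull M x ↔ z ∈ M)

/-- `δ` is the ordinal `M ∩ ω₁`, i.e. `δ(M)`. -/
def DeltaIs (ω1 : ZFSet.{0}) (M : Set ZFSet.{0}) (δ : ZFSet.{0}) : Prop :=
  IsOrd δ ∧ ∀ z : ZFSet.{0}, z ∈ δ ↔ (z ∈ ω1.toSet ∧ z ∈ M)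

/-! ### H_θ, cardinality, regularity -/

/-- `y` lies in the transitive closure of `x`. -/
def InTC (y x : ZFSet.{0}) : Prop :=
  ∃ n : ℕ, ∃ c : Fin (n + 1) → ZFSet.{0}, c 0 ∈ x ∧
    (∀ i : Fin n, c i.succ ∈ c i.castSucc) ∧ c (Fin.last n) = y

/-- `x` has cardinality (strictly) less than the ordinal `θ`. -/
def CardLt (x θ : ZFSet.{0}) : Prop :=
  ∃ β ∈ θ.toSet, ∃ f : x.toSet → β.toSet, Function.Injective f

/-- `x` has cardinality at most that of `κ`. -/
def CardLe (x κ : ZFSet.{0}) : Prop := ∃ f : x.toSet → κ.toSet, Function.Injective f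

/-- The class `H_θ` of sets hereditarily of cardinality `< θ`. -/
def HClass (θ : ZFSet.{0}) : Set ZFSet.{0} :=
  {x | CardLt x θ ∧ ∀ y, InTC y x → CardLt y θ}

/-- `θ` is a regular uncountable cardinal. -/
def IsRegular (θ : ZFSet.{0}) : Prop :=
  IsOrd θ ∧ ZFSet.omega ∈ θ ∧ ¬ θ.toSet.Countable ∧
    ∀ β ∈ θ.toSet, ∀ f : ZFSet.{0} → ZFSet.{0}, (∀ x ∈ β.toSet, f x ∈ θ) →
      ∃ γ ∈ θ.toSet, ∀ x ∈ β.toSet, f x ∈ γ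

/-- `x ≪ θ` : the double powerset of `x` belongs to `H_θ`. -/
def Gg (x θ : ZFSet.{0}) : Prop := ZFSet.powerset (ZFSet.powerset x) ∈ HClass θ

/-! ### ZFC⁻ and ZFC• -/

/-- `r` is a wellordering of `a`, with "every nonempty subset" relativized to `H`. -/
def IsWellOrderOn (H : Set ZFSet.{0}) (r a : ZFSet.{0}) : Prop :=
  (∀ z ∈ r, ∃ x y, x ∈ a ∧ y ∈ a ∧ z = ZFSet.pair x y) ∧
  (∀ x ∈ a.toSet, ∀ y ∈ a.toSet, x ≠ y →
    (ZFSet.pair x y ∈ r ↔ ZFSet.pair y x ∉ r)) ∧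
  (∀ x y z : ZFSet.{0}, ZFSet.pair x y ∈ r → ZFSet.pair y z ∈ r → ZFSet.pair x z ∈ r) ∧
  (∀ b : ZFSet.{0}, b ∈ H → b ⊆ a → (∃ x, x ∈ b) →
    ∃ x, x ∈ b ∧ ∀ y, y ∈ b → y ≠ x → ZFSet.pair x y ∈ r)

/-- `H` is a model of ZFC⁻ (= ZF minus powerset, with collection and wellordering),
stated semantically for a class `H`. -/
def ModelsZFCminus (H : Set ZFSet.{0}) : Prop :=
  (∅ : ZFSet.{0}) ∈ H ∧
  ZFSet.omega ∈ H ∧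
  (∀ a ∈ H, ∀ b ∈ H, ZFSet.pair a b ∈ H) ∧
  (∀ a ∈ H, ZFSet.sUnion a ∈ H) ∧
  -- separation scheme
  (∀ (n : ℕ) (φ : Fml (n + 1)) (v : Fin n → ZFSet.{0}), (∀ i, v i ∈ H) → ∀ a ∈ H,
    ∃ b ∈ H, ∀ x : ZFSet.{0}, x ∈ b ↔ (x ∈ a ∧ Sat H φ (Fin.snoc v x))) ∧
  -- collection scheme
  (∀ (n : ℕ) (φ : Fml (n + 2)) (v : Fin n → ZFSet.{0}), (∀ i, v i ∈ H) → ∀ a ∈ H,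
    (∀ x ∈ a.toSet, ∃ y ∈ H, Sat H φ (Fin.snoc (Fin.snoc v x) y)) →
    ∃ b ∈ H, ∀ x ∈ a.toSet, ∃ y, y ∈ b ∧ Sat H φ (Fin.snoc (Fin.snoc v x) y)) ∧
  -- wellordering axiom
  (∀ a ∈ H, ∃ r, r ∈ H ∧ IsWellOrderOn H r a)

/-! ### Clubs, stationarity, antichains, selfgenericity, precipitousness -/

/-- `C ⊆ ω₁` is club in `ω₁`. -/
def IsClub (ω1 C : ZFSet.{0}) : Prop :=
  C ⊆ ω1 ∧ (∀ α ∈ ω1.toSet, ∃ β, β ∈ C ∧ α ∈ β) ∧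
    ∀ δ ∈ ω1.toSet, (∃ β, β ∈ δ) →
      (∀ α ∈ δ.toSet, ∃ β, β ∈ C ∧ α ∈ β ∧ β ∈ δ) → δ ∈ C

/-- `S` is a stationary subset of `ω₁`, where only clubs belonging to the class `H`
are considered (`H = Set.univ` gives genuine stationarity). -/
def StatIn (H : Set ZFSet.{0}) (ω1 S : ZFSet.{0}) : Prop :=
  S ⊆ ω1 ∧ ∀ C : ZFSet.{0}, C ∈ H → IsClub ω1 C → ∃ x, x ∈ S ∧ x ∈ C

/-- Genuine stationarity in `ω₁`. -/
abbrev Stat (ω1 S : ZFSet.{0}) : Prop := StatIn Set.univ ω1 S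

/-- `A` is a maximal antichain in `NS_{ω₁}⁺` (relative to the class `H`). -/
def MaxAC (H : Set ZFSet.{0}) (ω1 A : ZFSet.{0}) : Prop :=
  (∀ S ∈ A.toSet, StatIn H ω1 S) ∧
  (∀ S ∈ A.toSet, ∀ T ∈ A.toSet, S ≠ T → ¬ StatIn H ω1 (S ∩ T)) ∧
  (∀ S : ZFSet.{0}, S ∈ H → StatIn H ω1 S → ∃ T ∈ A.toSet, StatIn H ω1 (S ∩ T))

/-- A countable `M` is selfgeneric (relative to the ambient class `H`). -/
def SelfGenericIn (H : Set ZFSet.{0}) (ω1 : ZFSet.{0}) (M : Set ZFSet.{0}) : Prop :=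
  ∀ A : ZFSet.{0}, A ∈ M → MaxAC H ω1 A →
    ∃ S, S ∈ A ∧ S ∈ M ∧ ∃ δ, DeltaIs ω1 M δ ∧ δ ∈ S

/-- `W` is a maximal antichain of stationary subsets of `S` (relative to `H`). -/
def MaxACBelow (H : Set ZFSet.{0}) (ω1 S W : ZFSet.{0}) : Prop :=
  (∀ T ∈ W.toSet, T ⊆ S ∧ StatIn H ω1 T) ∧
  (∀ T ∈ W.toSet, ∀ T' ∈ W.toSet, T ≠ T' → ¬ StatIn H ω1 (T ∩ T')) ∧
  (∀ T : ZFSet.{0}, T ∈ H → T ⊆ S → StatIn H ω1 T → ∃ T' ∈ W.toSet, StatIn H ω1 (T ∩ T'))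

/-- Jech's combinatorial characterization of precipitousness of `NS_{ω₁}`,
relativized to the class `H`. -/
def PrecipitousIn (H : Set ZFSet.{0}) (ω1 : ZFSet.{0}) : Prop :=
  ∀ S : ZFSet.{0}, S ∈ H → StatIn H ω1 S →
    ∀ W : ℕ → ZFSet.{0}, (∀ n, W n ∈ H) → (∀ n, MaxACBelow H ω1 S (W n)) →
      (∀ n, ∀ T ∈ (W (n + 1)).toSet, ∃ T' ∈ (W n).toSet, T ⊆ T') →
      ∃ T : ℕ → ZFSet.{0}, (∀ n, T n ∈ (W n).toSet) ∧ (∀ n, T (n + 1) ⊆ T n) ∧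
        ∃ x, ∀ n, x ∈ T n

/-- ZFC• : ZFC⁻ + the double powerset of ω₁ exists + NS_{ω₁} is precipitous,
for a class `H`. -/
def PowIn (H : Set ZFSet.{0}) (a p : ZFSet.{0}) : Prop := p ∈ H ∧ ∀ x, x ∈ p ↔ (x ∈ H ∧ x ⊆ a)

/-- The ordinal `δ` is `ω₁` as computed inside the class `H`. -/
def IsOmega1Of (H : Set ZFSet.{0}) (δ : ZFSet.{0}) : Prop :=
  δ ∈ H ∧ IsOrd δ ∧
  (∀ β ∈ δ.toSet, ∃ f, f ∈ H ∧ IsFun f ∧ (∀ x, domMem f x ↔ x ∈ ZFSet.omega) ∧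
    ∀ y ∈ β.toSet, ∃ n, ZFSet.pair n y ∈ f) ∧
  ¬ ∃ f, f ∈ H ∧ IsFun f ∧ (∀ x, domMem f x ↔ x ∈ ZFSet.omega) ∧
    ∀ y ∈ δ.toSet, ∃ n, ZFSet.pair n y ∈ f

def ModelsZFCbullet (H : Set ZFSet.{0}) : Prop :=
  ModelsZFCminus H ∧ ∃ δ, IsOmega1Of H δ ∧
    (∃ p q, PowIn H δ p ∧ PowIn H p q) ∧ PrecipitousIn H δ

/-! ### Stationarity in `[H_θ]^ω` and projective stationarity -/

def ClosedUnder (M : Set ZFSet.{0}) (F : List ZFSet.{0} → ZFSet.{0}) : Prop :=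
  ∀ l : List ZFSet.{0}, (∀ x ∈ l, x ∈ M) → F l ∈ M

/-- `X` is a stationary family of countable subsets of the class `A`. -/
def StatPow (A : Set ZFSet.{0}) (X : Set (Set ZFSet.{0})) : Prop :=
  ∀ F : List ZFSet.{0} → ZFSet.{0}, (∀ l, F l ∈ A) →
    ∃ M ∈ X, M.Countable ∧ M ⊆ A ∧ ClosedUnder M F

/-- `X` contains a club of countable subsets of the class `A`. -/
def ClubPow (A : Set ZFSet.{0}) (X : Set (Set ZFSet.{0})) : Prop :=
  ∃ F : List ZFSet.{0} → ZFSet.{0}, (∀ l, F l ∈ A) ∧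
    ∀ M : Set ZFSet.{0}, M.Countable → M ⊆ A → ClosedUnder M F → M ∈ X

/-- `X` is a projective stationary family of countable subsets of `A`. -/
def ProjStatPow (ω1 : ZFSet.{0}) (A : Set ZFSet.{0}) (X : Set (Set ZFSet.{0})) : Prop :=
  ∀ S : ZFSet.{0}, Stat ω1 S →
    StatPow A {M | M ∈ X ∧ ∃ δ, DeltaIs ω1 M δ ∧ δ ∈ S}

/-! ### Forcing notions (as ZF-sets) -/

/-- `p ≤ q` in the order coded by the set of pairs `le`. -/
def pLe (le p q : ZFSet.{0}) : Prop := ZFSet.pair p q ∈ le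

def IsForcing (P le : ZFSet.{0}) : Prop :=
  (∀ z ∈ le, ∃ p q, p ∈ P ∧ q ∈ P ∧ z = ZFSet.pair p q) ∧
  (∀ p ∈ P.toSet, pLe le p p) ∧
  (∀ p q r : ZFSet.{0}, pLe le p q → pLe le q r → pLe le p r)

/-- Compatibility of conditions. -/
def CompatC (P le p q : ZFSet.{0}) : Prop := ∃ r, r ∈ P ∧ pLe le r p ∧ pLe le r q

/-- `A` is a maximal antichain in the forcing `(P, le)`. -/
def PMaxAC (P le A : ZFSet.{0}) : Prop :=
  A ⊆ P ∧ (∀ p ∈ A.toSet, ∀ q ∈ A.toSet, p ≠ q → ¬ CompatC P le p q) ∧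
    ∀ p ∈ P.toSet, ∃ q ∈ A.toSet, CompatC P le p q

/-- `p'` is an `(M,ℙ)`-semigeneric condition. -/
def Semigeneric (ω1 P le : ZFSet.{0}) (M : Set ZFSet.{0}) (p' : ZFSet.{0}) : Prop :=
  ∀ q, q ∈ P → pLe le q p' → ∀ A : ZFSet.{0}, A ∈ M → PMaxAC P le A →
    ∃ r, r ∈ A ∧ CompatC P le r q ∧ ParallelO ω1 r M

/-- `p'` is a strongly `(M,ℙ)`-semigeneric condition. -/
def StronglySemigeneric (ω1 P le : ZFSet.{0}) (M : Set ZFSet.{0}) (p' : ZFSet.{0}) : Prop :=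
  ∀ q, q ∈ P → pLe le q p' → ∃ t, t ∈ P ∧ ParallelO ω1 t M ∧
    ∀ r, r ∈ Hull M t → r ∈ P → pLe le r t → CompatC P le r q

/-- `ℙ` is semiproper with respect to `M`. -/
def SemiproperWrt (ω1 P le : ZFSet.{0}) (M : Set ZFSet.{0}) : Prop :=
  ∀ p, p ∈ P → p ∈ M → ∃ p', p' ∈ P ∧ pLe le p' p ∧ Semigeneric ω1 P le M p'

/-- `ℙ` is strongly semiproper with respect to `M`. -/
def StronglySemiproperWrt (ω1 P le : ZFSet.{0}) (M : Set ZFSet.{0}) : Prop :=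
  ∀ p, p ∈ P → p ∈ M → ∃ p', p' ∈ P ∧ pLe le p' p ∧ StronglySemigeneric ω1 P le M p'

/-- `p'` is a strongly `(M,ℙ)`-generic condition (Mitchell). -/
def StronglyGeneric (P le : ZFSet.{0}) (M : Set ZFSet.{0}) (p' : ZFSet.{0}) : Prop :=
  ∀ q, q ∈ P → pLe le q p' → ∃ t, t ∈ P ∧ t ∈ M ∧
    ∀ r, r ∈ M → r ∈ P → pLe le r t → CompatC P le r q

def StronglyProperWrt (P le : ZFSet.{0}) (M : Set ZFSet.{0}) : Prop :=
  ∀ p, p ∈ P → p ∈ M → ∃ p', p' ∈ P ∧ pLe le p' p ∧ StronglyGeneric P le M p'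

/-- `ℙ` is strongly proper. -/
def StronglyProper (P le : ZFSet.{0}) : Prop :=
  ∀ θ : ZFSet.{0}, IsRegular θ → Gg (ZFSet.pair P le) θ →
    ClubPow (HClass θ)
      {M | M.Countable ∧ ElemSub M (HClass θ) ∧ StronglyProperWrt P le M}

/-- `ℙ` is strongly ssp. -/
def StronglySSP (ω1 P le : ZFSet.{0}) : Prop :=
  ∀ θ : ZFSet.{0}, IsRegular θ → Gg (ZFSet.pair P le) θ →
    ProjStatPow ω1 (HClass θ)
      {M | M.Countable ∧ ElemSub M (HClass θ) ∧ StronglySemiproperWrt ω1 P le M}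

/-! ### The games -/

/-- Rules of a game in which the moves of P2 grow a model via `Hull`. -/
structure GameRules : Type 2 where
  legal1 : Set ZFSet.{0} → ZFSet.{0} → Prop
  legal2 : Set ZFSet.{0} → ZFSet.{0} → ZFSet.{0} → Prop

/-- The models built from P2's moves `b`. -/
def Mods (M0 : Set ZFSet.{0}) (b : ℕ → ZFSet.{0}) : ℕ → Set ZFSet
  | 0 => M0
  | n + 1 => Hull (Mods M0 b n) (b n)

/-- A strategy for P2: sees the past rounds and P1's current move. -/
abbrev Strat2 : Type 1 := List (ZFSet.{0} × ZFSet.{0}) → ZFSet.{0} → ZFSet.{0}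

/-- A strategy for P1: sees the past rounds. -/
abbrev Strat1 : Type 1 := List (ZFSet.{0} × ZFSet.{0}) → ZFSet.{0}

def hist2 (σ : Strat2) (a : ℕ → ZFSet.{0}) : ℕ → List (ZFSet × ZFSet.{0})
  | 0 => []
  | n + 1 => hist2 σ a n ++ [(a n, σ (hist2 σ a n) (a n))]

/-- P2's responses when following `σ` against the P1-moves `a`. -/
def resp (σ : Strat2) (a : ℕ → ZFSet.{0}) (n : ℕ) : ZFSet.{0} := σ (hist2 σ a n) (a n)

/-- `σ` is a winning strategy for P2 (the Constructor): as long as P1 has played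
legally, P2's answers are legal. -/
def P2Wins (G : GameRules) (M0 : Set ZFSet.{0}) (σ : Strat2) : Prop :=
  ∀ a : ℕ → ZFSet.{0}, ∀ n : ℕ,
    (∀ k, k ≤ n → G.legal1 (Mods M0 (resp σ a) k) (a k)) →
    G.legal2 (Mods M0 (resp σ a) n) (a n) (resp σ a n)

def hist1 (τ : Strat1) (b : ℕ → ZFSet.{0}) : ℕ → List (ZFSet × ZFSet.{0})
  | 0 => []
  | n + 1 => hist1 τ b n ++ [(τ (hist1 τ b n), b n)]

def move1 (τ : Strat1) (b : ℕ → ZFSet.{0}) (n : ℕ) : ZFSet.{0} := τ (hist1 τ b n)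

/-- `τ` is a winning strategy for P1 (the Challenger): P1 always moves legally
(as long as P2 has), and eventually P2's answer is illegal. -/
def P1Wins (G : GameRules) (M0 : Set ZFSet.{0}) (τ : Strat1) : Prop :=
  ∀ b : ℕ → ZFSet.{0},
    (∀ n, (∀ k, k < n → G.legal2 (Mods M0 b k) (move1 τ b k) (b k)) →
      G.legal1 (Mods M0 b n) (move1 τ b n)) ∧
    ∃ n, (∀ k, k < n → G.legal2 (Mods M0 b k) (move1 τ b k) (b k)) ∧
      ¬ G.legal2 (Mods M0 b n) (move1 τ b n) (b n)

/-- The antichain catching game `G^cat_M` (antichains relative to the class `H`). -/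
def catRules (H : Set ZFSet.{0}) (ω1 : ZFSet.{0}) : GameRules where
  legal1 M A := A ∈ M ∧ MaxAC H ω1 A
  legal2 M A S := S ∈ A ∧ (∃ δ, DeltaIs ω1 M δ ∧ δ ∈ S) ∧ ParallelO ω1 S M

/-- The capturing game `G^cap_M(X)`. -/
def capRules (ω1 : ZFSet.{0}) (X : Set ZFSet.{0}) : GameRules where
  legal1 _ x := x ∈ X
  legal2 M x f := IsFun f ∧ (∀ y, domMem f y ↔ y ∈ ω1) ∧
    (∀ a b, ZFSet.pair a b ∈ f → b ∈ X) ∧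
    (∃ δ, DeltaIs ω1 M δ ∧ ZFSet.pair δ x ∈ f) ∧ ParallelO ω1 f M

/-- The catching-capturing game `G^{c-c}_M(X)`; P1's moves are tagged pairs. -/
def ccRules (H : Set ZFSet.{0}) (ω1 : ZFSet.{0}) (X : Set ZFSet.{0}) : GameRules where
  legal1 M m := (∃ A, m = ZFSet.pair ∅ A ∧ (catRules H ω1).legal1 M A) ∨
    (∃ x, m = ZFSet.pair {∅} x ∧ x ∈ X)
  legal2 M m r := (∃ A, m = ZFSet.pair ∅ A ∧ (catRules H ω1).legal2 M A r) ∨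
    (∃ x, m = ZFSet.pair {∅} x ∧ (capRules ω1 X).legal2 M x r)

end CcPaper
namespace CcPaper

/-! ### Auxiliary development -/

section Aux

open ZFSet

lemma zmem_toSet (a u : ZFSet) : a ∈ u.toSet ↔ a ∈ u := Iff.rfl

lemma ztoSet_insert (x y : ZFSet) : (insert x y).toSet = insert x y.toSet :=
  ZFSet.coe_insert x y

lemma ztoSet_empty : (∅ : ZFSet).toSet = ∅ := ZFSet.coe_empty

/-! #### Ordinal basics -/

lemma isOrd_of_mem {x y : ZFSet} (hx : IsOrd x) (hy : y ∈ x) : IsOrd y :=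
  ⟨hx.2 y hy, fun z hz => hx.2 z (hx.1 y hy hz)⟩

theorem triZ (x : ZFSet) : IsOrd x → ∀ y : ZFSet, IsOrd y → x ∈ y ∨ x = y ∨ y ∈ x := by
  induction x using ZFSet.mem_wf.induction with
  | _ x IH1 =>
    intro hx y
    induction y using ZFSet.mem_wf.induction with
    | _ y IH2 =>
      intro hy
      by_cases h1 : x ∈ y
      · exact Or.inl h1
      by_cases h2 : y ∈ x
      · exact Or.inr (Or.inr h2)
      refine Or.inr (Or.inl (ZFSet.ext fun u => ⟨?_, ?_⟩))
      · intro hu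
        rcases IH1 u hu (isOrd_of_mem hx hu) y hy with h | h | h
        · exact h
        · exact absurd (h ▸ hu) h2
        · exact absurd (hx.1 u hu h) h2
      · intro hu
        rcases IH2 u hu (isOrd_of_mem hy hu) with h | h | h
        · exact absurd (hy.1 u hu h) h1
        · exact absurd (h ▸ hu) h1
        · exact h

lemma empty_mem_of_ord {x : ZFSet} (h : IsOrd x) (hne : x ≠ ∅) : ∅ ∈ x := by
  obtain ⟨y, hy, hxy⟩ := ZFSet.regularity x hne
  have : y = ∅ := by
    rw [ZFSet.eq_empty]
    intro u hu
    have : u ∈ x ∩ y := ZFSet.mem_inter.2 ⟨h.1 y hy hu, hu⟩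
    rw [hxy] at this
    exact ZFSet.notMem_empty u this
  exact this ▸ hy

/-! #### ω₁ basics -/

variable {ω1 : ZFSet}

lemma succ_mem_omega1 (hω1 : IsOmega1 ω1) {β : ZFSet} (hβ : β ∈ ω1) :
    insert β β ∈ ω1 := by
  have hβo : IsOrd β := isOrd_of_mem hω1.1 hβ
  have hins : IsOrd (insert β β) := by
    constructor
    · intro u hu w hw
      rcases ZFSet.mem_insert_iff.1 hu with rfl | hu
      · exact ZFSet.mem_insert_iff.2 (Or.inr hw)
      · exact ZFSet.mem_insert_iff.2 (Or.inr (hβo.1 u hu hw))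
    · intro u hu
      rcases ZFSet.mem_insert_iff.1 hu with rfl | hu
      · exact hβo.1
      · exact hβo.2 u hu
  rcases triZ _ hins ω1 hω1.1 with h | h | h
  · exact h
  · exfalso
    apply hω1.2.1
    rw [← h, ztoSet_insert]
    exact (hω1.2.2 β ((zmem_toSet _ _).2 hβ)).insert β
  · exfalso
    rcases ZFSet.mem_insert_iff.1 h with h' | h'
    · exact ZFSet.mem_irrefl ω1 (h' ▸ hβ)
    · exact ZFSet.mem_irrefl ω1 (hω1.1.1 β hβ h')

lemma mem_omega1_trans (hω1 : IsOmega1 ω1) {β z : ZFSet} (hβ : β ∈ ω1) (hz : z ∈ β) :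
    z ∈ ω1 := hω1.1.1 β hβ hz

/-- A countable subset of `ω₁` is strictly bounded. -/
lemma bounded_of_countable (hω1 : IsOmega1 ω1) {D : Set ZFSet}
    (hD : D.Countable) (hsub : D ⊆ ω1.toSet) :
    ∃ γ, γ ∈ ω1.toSet ∧ ∀ β ∈ D, β ∈ γ := by
  by_contra hcon
  push_neg at hcon
  have hcov : ω1.toSet ⊆ ⋃ β ∈ D, (β.toSet ∪ {β}) := by
    intro γ hγ
    obtain ⟨β, hβ, hβγ⟩ := hcon γ hγ
    have hγo : IsOrd γ := isOrd_of_mem hω1.1 ((zmem_toSet _ _).1 hγ)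
    have hβo : IsOrd β := isOrd_of_mem hω1.1 ((zmem_toSet _ _).1 (hsub hβ))
    have : γ ∈ β ∨ γ = β := by
      rcases triZ γ hγo β hβo with h | h | h
      · exact Or.inl h
      · exact Or.inr h
      · exact absurd h hβγ
    refine Set.mem_biUnion hβ ?_
    rcases this with h | h
    · exact Or.inl ((zmem_toSet _ _).2 h)
    · exact Or.inr (by simp [h])
  have : (⋃ β ∈ D, (β.toSet ∪ {β})).Countable :=
    Set.Countable.biUnion hD fun β hβ =>
      (hω1.2.2 β (hsub hβ)).union (Set.countable_singleton β)
  exact hω1.2.1 (this.mono hcov)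

/-! #### Transitive closure lemmas -/

lemma inTC_of_mem {x y : ZFSet} (h : y ∈ x) : InTC y x :=
  ⟨0, fun _ => y, h, fun i => i.elim0, rfl⟩

lemma inTC_of_inTC_of_mem {x c y : ZFSet} (hc : c ∈ x) (h : InTC y c) : InTC y x := by
  obtain ⟨n, ch, h0, hstep, hlast⟩ := h
  refine ⟨n + 1, Fin.cons c ch, by simpa using hc, ?_, ?_⟩
  · intro i
    induction i using Fin.cases with
    | zero => simpa using h0
    | succ j =>
      have : (j.succ).castSucc = (j.castSucc).succ := by
        simp [Fin.ext_iff]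
      rw [this]
      simpa using hstep j
  · have : Fin.last (n + 1) = (Fin.last n).succ := by simp [Fin.ext_iff]
    rw [this]
    simpa using hlast

lemma inTC_peel {x y : ZFSet} (h : InTC y x) :
    y ∈ x ∨ ∃ c, c ∈ x ∧ InTC y c := by
  obtain ⟨n, ch, h0, hstep, hlast⟩ := h
  cases n with
  | zero =>
    refine Or.inl ?_
    rw [← hlast]
    exact h0
  | succ m =>
    refine Or.inr ⟨ch 0, h0, m, fun i => ch i.succ, ?_, ?_, ?_⟩
    · have h := hstep 0
      simpa using h
    · intro i
      show ch (i.succ).succ ∈ ch (i.castSucc).succ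
      rw [show (i.castSucc).succ = (i.succ).castSucc from by simp [Fin.ext_iff]]
      exact hstep i.succ
    · show ch (Fin.last m).succ = y
      rw [show (Fin.last m).succ = Fin.last (m + 1) from by simp [Fin.ext_iff]]
      exact hlast

lemma inTC_mem_of_transitive {x : ZFSet} (hx : x.IsTransitive) :
    ∀ {y : ZFSet}, InTC y x → y ∈ x := by
  suffices H : ∀ n (ch : Fin (n+1) → ZFSet), ch 0 ∈ x →
      (∀ i : Fin n, ch i.succ ∈ ch i.castSucc) → ch (Fin.last n) ∈ x by
    rintro y ⟨n, ch, h0, hstep, rfl⟩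
    exact H n ch h0 hstep
  intro n
  induction n with
  | zero => intro ch h0 _; exact h0
  | succ m IH =>
    intro ch h0 hstep
    have hprev : ch (Fin.last m).castSucc ∈ x := by
      refine IH (fun i => ch i.castSucc) h0 ?_
      intro i
      show ch (i.succ).castSucc ∈ ch (i.castSucc).castSucc
      rw [show (i.succ).castSucc = (i.castSucc).succ from by simp [Fin.ext_iff]]
      exact hstep i.castSucc
    have hlaststep := hstep (Fin.last m)
    have : Fin.last (m+1) = (Fin.last m).succ := by simp [Fin.ext_iff]
    rw [this]
    exact hx _ hprev (by exact hlaststep)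

/-! #### Von Neumann numerals and cardinality -/

def ofNatZ : ℕ → ZFSet
  | 0 => ∅
  | n + 1 => insert (ofNatZ n) (ofNatZ n)

lemma ofNatZ_mem_omega (n : ℕ) : ofNatZ n ∈ ZFSet.omega := by
  induction n with
  | zero => exact ZFSet.omega_zero
  | succ m IH => exact ZFSet.omega_succ IH

lemma ofNatZ_mem_of_lt : ∀ {m n : ℕ}, m < n → ofNatZ m ∈ ofNatZ n := by
  intro m n h
  induction n with
  | zero => omega
  | succ k IH =>
    rcases Nat.lt_succ_iff_lt_or_eq.1 h with h' | h'
    · exact ZFSet.mem_insert_iff.2 (Or.inr (IH h'))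
    · subst h'; exact ZFSet.mem_insert_iff.2 (Or.inl rfl)

lemma ofNatZ_injective : Function.Injective ofNatZ := by
  intro m n h
  by_contra hne
  rcases Nat.lt_or_ge m n with h' | h'
  · exact ZFSet.mem_irrefl _ (h ▸ ofNatZ_mem_of_lt h')
  · have : n < m := lt_of_le_of_ne h' (Ne.symm hne)
    exact ZFSet.mem_irrefl _ (h ▸ ofNatZ_mem_of_lt this)

lemma cardLt_of_countable {x θ : ZFSet} (hωθ : ZFSet.omega ∈ θ)
    (hx : x.toSet.Countable) : CardLt x θ := by
  obtain ⟨g, hg⟩ := Set.countable_iff_exists_injective.mp hx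
  refine ⟨ZFSet.omega, (zmem_toSet _ _).2 hωθ,
    fun a => ⟨ofNatZ (g a), (zmem_toSet _ _).2 (ofNatZ_mem_omega _)⟩, ?_⟩
  intro a b hab
  exact hg (ofNatZ_injective (congrArg Subtype.val hab))

/-! #### H_θ lemmas -/

lemma hclass_trans (θ : ZFSet) : TransClass (HClass θ) := by
  intro x hx y hy
  exact ⟨hx.2 y (inTC_of_mem hy), fun w hw => hx.2 w (inTC_of_inTC_of_mem hy hw)⟩

lemma mem_hclass_of_hc {θ x : ZFSet} (hωθ : ZFSet.omega ∈ θ)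
    (hx : x.toSet.Countable) (h2 : ∀ y, InTC y x → y.toSet.Countable) :
    x ∈ HClass θ :=
  ⟨cardLt_of_countable hωθ hx, fun y hy => cardLt_of_countable hωθ (h2 y hy)⟩

lemma empty_mem_hclass {θ : ZFSet} (hωθ : ZFSet.omega ∈ θ) : (∅ : ZFSet) ∈ HClass θ := by
  refine mem_hclass_of_hc hωθ (by simp [ztoSet_empty]) ?_
  intro y hy
  rcases inTC_peel hy with h | ⟨c, hc, _⟩
  · exact absurd h (ZFSet.notMem_empty y)
  · exact absurd hc (ZFSet.notMem_empty c)

lemma pairset_mem_hclass {θ a b : ZFSet} (hωθ : ZFSet.omega ∈ θ)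
    (ha : a ∈ HClass θ) (hb : b ∈ HClass θ) : ({a, b} : ZFSet) ∈ HClass θ := by
  constructor
  · apply cardLt_of_countable hωθ
    have : ({a, b} : ZFSet).toSet = {a, b} := by
      ext u; simp [zmem_toSet, ZFSet.mem_pair]
    rw [this]
    exact (Set.countable_singleton a).insert b |>.mono (by simp) |>.insert a
  · intro y hy
    rcases inTC_peel hy with h | ⟨c, hc, hyc⟩
    · rcases ZFSet.mem_pair.1 h with rfl | rfl
      · exact ha.1
      · exact hb.1
    · rcases ZFSet.mem_pair.1 hc with rfl | rfl
      · exact ha.2 y hyc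
      · exact hb.2 y hyc

lemma singleton_mem_hclass {θ a : ZFSet} (hωθ : ZFSet.omega ∈ θ)
    (ha : a ∈ HClass θ) : ({a} : ZFSet) ∈ HClass θ := by
  have : ({a} : ZFSet) = {a, a} := by
    ext u; simp [ZFSet.mem_pair, ZFSet.mem_singleton]
  rw [this]
  exact pairset_mem_hclass hωθ ha ha

lemma pair_mem_hclass {θ a b : ZFSet} (hωθ : ZFSet.omega ∈ θ)
    (ha : a ∈ HClass θ) (hb : b ∈ HClass θ) : ZFSet.pair a b ∈ HClass θ :=
  pairset_mem_hclass hωθ (singleton_mem_hclass hωθ ha) (pairset_mem_hclass hωθ ha hb)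

lemma mem_omega1_hclass {ω1 θ β : ZFSet} (hω1 : IsOmega1 ω1) (hωθ : ZFSet.omega ∈ θ)
    (hβ : β ∈ ω1) : β ∈ HClass θ := by
  refine mem_hclass_of_hc hωθ (hω1.2.2 β ((zmem_toSet _ _).2 hβ)) ?_
  intro y hy
  have hβo : IsOrd β := isOrd_of_mem hω1.1 hβ
  have : y ∈ β := inTC_mem_of_transitive hβo.1 hy
  exact hω1.2.2 y ((zmem_toSet _ _).2 (mem_omega1_trans hω1 hβ this))


/-! #### Closure under a list operation -/

section Clos

open ZFSet

variable {G : List ZFSet → ZFSet} {X Y : Set ZFSet} {x : ZFSet}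

inductive ClosMem (G : List ZFSet → ZFSet) (X : Set ZFSet) : ZFSet → Prop
  | base {x : ZFSet} : x ∈ X → ClosMem G X x
  | step (l : List ZFSet) : (∀ x ∈ l, ClosMem G X x) → ClosMem G X (G l)

lemma ClosMem.mono (h : X ⊆ Y) : ClosMem G X x → ClosMem G Y x := by
  intro hx
  induction hx with
  | base h' => exact .base (h h')
  | step l _ IH => exact .step l IH

lemma exists_uniform_of_list {ι : Type*} [Nonempty ι] (D : ι → Set ZFSet)
    (hdir : ∀ i j, ∃ k, D i ⊆ D k ∧ D j ⊆ D k) :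
    ∀ l : List ZFSet, (∀ x ∈ l, ∃ i, ClosMem G (D i) x) →
      ∃ i, ∀ x ∈ l, ClosMem G (D i) x := by
  intro l
  induction l with
  | nil => exact fun _ => ⟨Classical.arbitrary ι, by simp⟩
  | cons a l IH =>
    intro h
    obtain ⟨i, hi⟩ := h a (List.mem_cons_self)
    obtain ⟨j, hj⟩ := IH fun x hx => h x (List.mem_cons_of_mem a hx)
    obtain ⟨k, hik, hjk⟩ := hdir i j
    refine ⟨k, ?_⟩
    intro x hx
    rcases List.mem_cons.1 hx with rfl | hx
    · exact hi.mono hik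
    · exact (hj x hx).mono hjk

lemma closMem_iUnion {ι : Type*} [Nonempty ι] (D : ι → Set ZFSet)
    (hdir : ∀ i j, ∃ k, D i ⊆ D k ∧ D j ⊆ D k) :
    ClosMem G (⋃ i, D i) x → ∃ i, ClosMem G (D i) x := by
  intro h
  induction h with
  | base h' =>
    obtain ⟨i, hi⟩ := Set.mem_iUnion.1 h'
    exact ⟨i, .base hi⟩
  | step l _ IH =>
    obtain ⟨i, hi⟩ := exists_uniform_of_list D hdir l IH
    exact ⟨i, .step l hi⟩

def closStage (G : List ZFSet → ZFSet) (X : Set ZFSet) : ℕ → Set ZFSet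
  | 0 => X
  | n + 1 => closStage G X n ∪ G '' {l : List ZFSet | ∀ x ∈ l, x ∈ closStage G X n}

lemma closStage_mono {m n : ℕ} (h : m ≤ n) : closStage G X m ⊆ closStage G X n := by
  induction n with
  | zero => simpa [Nat.le_zero.1 h] using Set.Subset.rfl
  | succ k IH =>
    rcases Nat.le_succ_iff_eq_or_le.1 h with rfl | h'
    · exact Set.Subset.rfl
    · exact (IH h').trans Set.subset_union_left

lemma listSet_countable {s : Set ZFSet} (hs : s.Countable) :
    {l : List ZFSet | ∀ x ∈ l, x ∈ s}.Countable := by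
  haveI := hs.to_subtype
  have hsub : {l : List ZFSet | ∀ x ∈ l, x ∈ s} ⊆
      Set.range (List.map (Subtype.val : s → ZFSet)) := by
    intro l hl
    induction l with
    | nil => exact ⟨[], rfl⟩
    | cons a l IH =>
      obtain ⟨l', hl'⟩ := IH fun x hx => hl x (List.mem_cons_of_mem a hx)
      exact ⟨⟨a, hl a (List.mem_cons_self)⟩ :: l', by simp [hl']⟩
  exact (Set.countable_range _).mono hsub

lemma closStage_countable (hX : X.Countable) : ∀ n, (closStage G X n).Countable := by
  intro n
  induction n with
  | zero => exact hX
  | succ k IH => exact IH.union ((listSet_countable IH).image G)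

lemma closMem_exists_stage : ClosMem G X x → ∃ n, x ∈ closStage G X n := by
  intro h
  induction h with
  | base h' => exact ⟨0, h'⟩
  | step l _ IH =>
    have huni : ∃ n, ∀ x ∈ l, x ∈ closStage G X n := by
      clear * - IH
      induction l with
      | nil => exact ⟨0, by simp⟩
      | cons a l IH2 =>
        obtain ⟨na, hna⟩ := IH a (List.mem_cons_self)
        obtain ⟨nl, hnl⟩ := IH2 fun x hx => IH x (List.mem_cons_of_mem a hx)
        refine ⟨max na nl, ?_⟩
        intro x hx
        rcases List.mem_cons.1 hx with rfl | hx
        · exact closStage_mono (le_max_left _ _) hna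
        · exact closStage_mono (le_max_right _ _) (hnl x hx)
    obtain ⟨n, hn⟩ := huni
    exact ⟨n + 1, Or.inr ⟨l, hn, rfl⟩⟩

lemma closMem_countable (hX : X.Countable) : {x | ClosMem G X x}.Countable := by
  have : {x | ClosMem G X x} ⊆ ⋃ n, closStage G X n := fun x hx =>
    Set.mem_iUnion.2 (closMem_exists_stage hx)
  exact (Set.countable_iUnion (closStage_countable hX)).mono this

end Clos

/-! #### Formulas and absoluteness -/

section Formulas

open ZFSet

lemma sat_mem {D : Set ZFSet} {n} {i j : Fin n} {v : Fin n → ZFSet} :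
    Sat D (.mem i j) v ↔ v i ∈ v j := Iff.rfl
lemma sat_eqF {D : Set ZFSet} {n} {i j : Fin n} {v : Fin n → ZFSet} :
    Sat D (.eq i j) v ↔ v i = v j := Iff.rfl
lemma sat_and {D : Set ZFSet} {n} {φ ψ : Fml n} {v : Fin n → ZFSet} :
    Sat D (.and φ ψ) v ↔ Sat D φ v ∧ Sat D ψ v := Iff.rfl
lemma sat_notF {D : Set ZFSet} {n} {φ : Fml n} {v : Fin n → ZFSet} :
    Sat D (.not φ) v ↔ ¬ Sat D φ v := Iff.rfl
lemma sat_ex {D : Set ZFSet} {n} {φ : Fml (n+1)} {v : Fin n → ZFSet} :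
    Sat D (.ex φ) v ↔ ∃ x ∈ D, Sat D φ (Fin.snoc v x) := Iff.rfl

def impF {n : ℕ} (φ ψ : Fml n) : Fml n := .not (.and φ (.not ψ))
def orF {n : ℕ} (φ ψ : Fml n) : Fml n := .not (.and (.not φ) (.not ψ))
def allF {n : ℕ} (φ : Fml (n + 1)) : Fml n := .not (.ex (.not φ))

lemma sat_impF {D : Set ZFSet} {n : ℕ} {φ ψ : Fml n} {v : Fin n → ZFSet} :
    Sat D (impF φ ψ) v ↔ (Sat D φ v → Sat D ψ v) := by
  simp only [impF, Sat]; tauto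

lemma sat_orF {D : Set ZFSet} {n : ℕ} {φ ψ : Fml n} {v : Fin n → ZFSet} :
    Sat D (orF φ ψ) v ↔ (Sat D φ v ∨ Sat D ψ v) := by
  simp only [orF, Sat]; tauto

lemma sat_allF {D : Set ZFSet} {n : ℕ} {φ : Fml (n + 1)} {v : Fin n → ZFSet} :
    Sat D (allF φ) v ↔ ∀ x ∈ D, Sat D φ (Fin.snoc v x) := by
  simp only [allF, Sat]
  push_neg
  rfl

/-- `∀ w ∈ p, w = s ∨ w = d` in context of size 6 with `p = 3`, `s = 4`, `d = 5`. -/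
def clause3 : Fml 6 :=
  allF (impF (.mem (Fin.last 6) ((3 : Fin 4).castSucc.castSucc.castSucc))
    (orF (.eq (Fin.last 6) (Fin.last 4).castSucc.castSucc)
         (.eq (Fin.last 6) (Fin.last 5).castSucc)))

/-- `s = {v a}` in context of size 6 with `s = 4`. -/
def clause4 (a : Fin 4) : Fml 6 :=
  .and (.mem (a.castSucc.castSucc) (Fin.last 4).castSucc)
    (allF (impF (.mem (Fin.last 6) (Fin.last 4).castSucc.castSucc)
      (.eq (Fin.last 6) (a.castSucc.castSucc.castSucc))))

/-- `d = {v a, v b}` in context of size 6 with `d = 5`. -/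
def clause5 (a b : Fin 4) : Fml 6 :=
  .and (.mem (a.castSucc.castSucc) (Fin.last 5))
    (.and (.mem (b.castSucc.castSucc) (Fin.last 5))
      (allF (impF (.mem (Fin.last 6) (Fin.last 5).castSucc)
        (orF (.eq (Fin.last 6) (a.castSucc.castSucc.castSucc))
             (.eq (Fin.last 6) (b.castSucc.castSucc.castSucc))))))

/-- A formula asserting `v 3 = pair (v a) (v b)` (absolutely over transitive classes). -/
def isPairF (a b : Fin 4) : Fml 4 :=
  .ex (.ex (.and (.mem (Fin.last 4).castSucc ((3 : Fin 4).castSucc.castSucc))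
    (.and (.mem (Fin.last 5) ((3 : Fin 4).castSucc.castSucc))
      (.and clause3 (.and (clause4 a) (clause5 a b))))))

lemma sat_isPairF {D : Set ZFSet} (hD : TransClass D) (a b : Fin 4) {v : Fin 4 → ZFSet}
    (h3 : v 3 ∈ D) :
    Sat D (isPairF a b) v ↔ v 3 = ZFSet.pair (v a) (v b) := by
  have hpair : ZFSet.pair (v a) (v b) = ({({(v a)} : ZFSet), ({(v a), (v b)} : ZFSet)} : ZFSet) :=
    rfl
  simp only [isPairF, clause3, clause4, clause5, sat_ex, sat_and, sat_mem, sat_eqF,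
    sat_allF, sat_impF, sat_orF, Fin.snoc_castSucc, Fin.snoc_last]
  constructor
  · rintro ⟨s, hsD, d, hdD, hs3, hd3, honly, ⟨has, hsingle⟩, hvad, hvbd, hdouble⟩
    have hs : s = ({(v a)} : ZFSet) := by
      apply ZFSet.ext
      intro u
      constructor
      · intro hu
        have := hsingle u (hD _ hsD _ hu) hu
        simp [this, ZFSet.mem_singleton]
      · intro hu
        rw [ZFSet.mem_singleton] at hu
        rw [hu]
        exact has
    have hd : d = ({(v a), (v b)} : ZFSet) := by
      apply ZFSet.ext
      intro u
      constructor
      · intro hu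
        rcases hdouble u (hD _ hdD _ hu) hu with h | h <;> rw [h] <;>
          [exact ZFSet.mem_pair.2 (Or.inl rfl); exact ZFSet.mem_pair.2 (Or.inr rfl)]
      · intro hu
        rcases ZFSet.mem_pair.1 hu with rfl | rfl
        · exact hvad
        · exact hvbd
    have h33 : v 3 = ({s, d} : ZFSet) := by
      apply ZFSet.ext
      intro u
      constructor
      · intro hu
        rcases honly u (hD _ h3 _ hu) hu with h | h <;> rw [h] <;>
          [exact ZFSet.mem_pair.2 (Or.inl rfl); exact ZFSet.mem_pair.2 (Or.inr rfl)]
      · intro hu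
        rcases ZFSet.mem_pair.1 hu with rfl | rfl
        · exact hs3
        · exact hd3
    rw [h33, hs, hd, hpair]
  · intro hv
    have hsmem : ({(v a)} : ZFSet) ∈ v 3 := by
      rw [hv, hpair]; exact ZFSet.mem_pair.2 (Or.inl rfl)
    have hdmem : ({(v a), (v b)} : ZFSet) ∈ v 3 := by
      rw [hv, hpair]; exact ZFSet.mem_pair.2 (Or.inr rfl)
    refine ⟨{(v a)}, hD _ h3 _ hsmem, {(v a), (v b)}, hD _ h3 _ hdmem,
      hsmem, hdmem, ?_, ⟨ZFSet.mem_singleton.2 rfl, ?_⟩,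
      ZFSet.mem_pair.2 (Or.inl rfl), ZFSet.mem_pair.2 (Or.inr rfl), ?_⟩
    · intro w _ hw
      rw [hv, hpair] at hw
      exact ZFSet.mem_pair.1 hw
    · intro w _ hw
      exact ZFSet.mem_singleton.1 hw
    · intro w _ hw
      exact ZFSet.mem_pair.1 hw

/-- Body of `F1`, in context `(t, f, y, p)` : `p ∈ f ∧ p = pair t y`. -/
def body1 : Fml 4 := .and (.mem 3 1) (isPairF 0 2)

/-- `F1` in context `(t, f)` says: `∃ y, pair t y ∈ f`. -/
def F1 : Fml 2 := .ex (.ex body1)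

lemma sat_body1 {D : Set ZFSet} (hD : TransClass D) {v : Fin 4 → ZFSet} (hf : v 1 ∈ D) :
    Sat D body1 v ↔ (v 3 ∈ v 1 ∧ v 3 = ZFSet.pair (v 0) (v 2)) := by
  constructor
  · rintro ⟨h1, h2⟩
    have h1' : v 3 ∈ v 1 := h1
    exact ⟨h1', (sat_isPairF hD 0 2 (hD _ hf _ h1')).1 h2⟩
  · rintro ⟨h1, h2⟩
    exact ⟨h1, (sat_isPairF hD 0 2 (hD _ hf _ h1)).2 h2⟩

/-- Body of `F2`, in context `(t, z, f, p)` : `p ∈ f ∧ (∀ w ∈ f, w = p) ∧ p = pair t z`. -/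
def body2 : Fml 4 :=
  .and (.mem 3 2)
    (.and (allF (impF (.mem (Fin.last 4) ((2 : Fin 4).castSucc))
                      (.eq (Fin.last 4) ((3 : Fin 4).castSucc))))
          (isPairF 0 1))

/-- `F2` in context `(t, z)` says: `∃ f, f = {pair t z}`. -/
def F2 : Fml 2 := .ex (.ex body2)

lemma sat_body2 {D : Set ZFSet} (hD : TransClass D) {v : Fin 4 → ZFSet} (hf : v 2 ∈ D) :
    Sat D body2 v ↔ (v 3 ∈ v 2 ∧ (∀ w ∈ v 2, w = v 3) ∧ v 3 = ZFSet.pair (v 0) (v 1)) := by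
  constructor
  · rintro ⟨h1, h2, h3⟩
    have h1' : v 3 ∈ v 2 := h1
    refine ⟨h1', ?_, (sat_isPairF hD 0 1 (hD _ hf _ h1')).1 h3⟩
    intro w hw
    have h2' := sat_allF.1 h2 w (hD _ hf _ hw)
    have h2'' := sat_impF.1 h2'
    simp only [sat_mem, sat_eqF, Fin.snoc_castSucc, Fin.snoc_last] at h2''
    exact h2'' hw
  · rintro ⟨h1, h2, h3⟩
    refine ⟨h1, ?_, (sat_isPairF hD 0 1 (hD _ hf _ h1)).2 h3⟩
    rw [sat_allF]
    intro x _
    rw [sat_impF]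
    simp only [sat_mem, sat_eqF, Fin.snoc_castSucc, Fin.snoc_last]
    exact h2 x

lemma sat_F1_of {D : Set ZFSet} (hD : TransClass D) {t f y : ZFSet} (hf : f ∈ D)
    (hy : y ∈ D) (hp : ZFSet.pair t y ∈ f) : Sat D F1 ![t, f] := by
  refine sat_ex.2 ⟨y, hy, sat_ex.2 ⟨ZFSet.pair t y, hD _ hf _ hp, ?_⟩⟩
  exact (sat_body1 hD
    (v := Fin.snoc (Fin.snoc (![t, f] : Fin 2 → ZFSet) y : Fin 3 → ZFSet) (ZFSet.pair t y))
    hf).2 ⟨hp, rfl⟩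

lemma hull_subset {θ : ZFSet} {M : Set ZFSet} (hM : ElemSub M (HClass θ)) {t : ZFSet}
    (ht : t ∈ M) : Hull M t ⊆ M := by
  rintro y ⟨f, hfM, hfun, hpair⟩
  have hD : TransClass (HClass θ) := hclass_trans θ
  have hfH : f ∈ HClass θ := hM.1 hfM
  have hpH : ZFSet.pair t y ∈ HClass θ := hD _ hfH _ hpair
  have htyH : ({t, y} : ZFSet) ∈ HClass θ := hD _ hpH _ (ZFSet.mem_pair.2 (Or.inr rfl))
  have hyH : y ∈ HClass θ := hD _ htyH _ (ZFSet.mem_pair.2 (Or.inr rfl))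
  have hsatH : Sat (HClass θ) F1 ![t, f] := sat_F1_of hD hfH hyH hpair
  have hvM : ∀ i, (![t, f] : Fin 2 → ZFSet) i ∈ M := by
    intro i
    match i with
    | 0 => exact ht
    | 1 => exact hfM
  have hsatM : Sat M F1 ![t, f] := (hM.2 F1 ![t, f] hvM).2 hsatH
  obtain ⟨y', hy'M, hsat1⟩ := sat_ex.1 hsatM
  obtain ⟨p', hp'M, hsat2⟩ := sat_ex.1 hsat1
  have hv4 : ∀ i,
      (Fin.snoc (Fin.snoc (![t, f] : Fin 2 → ZFSet) y' : Fin 3 → ZFSet) p' : Fin 4 → ZFSet) i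
        ∈ M := by
    intro i
    match i with
    | 0 => exact ht
    | 1 => exact hfM
    | 2 => exact hy'M
    | 3 => exact hp'M
  have hsatH' := (hM.2 body1 _ hv4).1 hsat2
  obtain ⟨hmem, heq⟩ := (sat_body1 hD
    (v := Fin.snoc (Fin.snoc (![t, f] : Fin 2 → ZFSet) y' : Fin 3 → ZFSet) p') hfH).1 hsatH'
  have hmem' : p' ∈ f := hmem
  have heq' : p' = ZFSet.pair t y' := heq
  have hyy : y = y' := hfun.2 t y y' hpair (heq' ▸ hmem')
  rw [hyy]
  exact hy'M

lemma mem_hull {θ : ZFSet} {M : Set ZFSet} (hωθ : ZFSet.omega ∈ θ)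
    (hM : ElemSub M (HClass θ)) {t z : ZFSet} (ht : t ∈ M) (hz : z ∈ M) : z ∈ Hull M t := by
  have hD : TransClass (HClass θ) := hclass_trans θ
  have htH : t ∈ HClass θ := hM.1 ht
  have hzH : z ∈ HClass θ := hM.1 hz
  have hpH : ZFSet.pair t z ∈ HClass θ := pair_mem_hclass hωθ htH hzH
  have hsH : ({ZFSet.pair t z} : ZFSet) ∈ HClass θ := singleton_mem_hclass hωθ hpH
  have hsatH : Sat (HClass θ) F2 ![t, z] := by
    refine sat_ex.2 ⟨{ZFSet.pair t z}, hsH, sat_ex.2 ⟨ZFSet.pair t z, hpH, ?_⟩⟩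
    refine (sat_body2 hD
      (v := Fin.snoc (Fin.snoc (![t, z] : Fin 2 → ZFSet) ({ZFSet.pair t z} : ZFSet) :
        Fin 3 → ZFSet) (ZFSet.pair t z)) hsH).2 ⟨?_, ?_, rfl⟩
    · exact ZFSet.mem_singleton.2 rfl
    · intro w hw
      exact ZFSet.mem_singleton.1 hw
  have hvM : ∀ i, (![t, z] : Fin 2 → ZFSet) i ∈ M := by
    intro i
    match i with
    | 0 => exact ht
    | 1 => exact hz
  have hsatM := (hM.2 F2 ![t, z] hvM).2 hsatH
  obtain ⟨f', hf'M, hsat1⟩ := sat_ex.1 hsatM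
  obtain ⟨p', hp'M, hsat2⟩ := sat_ex.1 hsat1
  have hv4 : ∀ i,
      (Fin.snoc (Fin.snoc (![t, z] : Fin 2 → ZFSet) f' : Fin 3 → ZFSet) p' : Fin 4 → ZFSet) i
        ∈ M := by
    intro i
    match i with
    | 0 => exact ht
    | 1 => exact hz
    | 2 => exact hf'M
    | 3 => exact hp'M
  have hsatH2 := (hM.2 body2 _ hv4).1 hsat2
  obtain ⟨hmem, honly, heq⟩ := (sat_body2 hD
    (v := Fin.snoc (Fin.snoc (![t, z] : Fin 2 → ZFSet) f' : Fin 3 → ZFSet) p')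
    (hM.1 hf'M)).1 hsatH2
  have hmem' : p' ∈ f' := hmem
  have honly' : ∀ w ∈ f', w = p' := honly
  have heq' : p' = ZFSet.pair t z := heq
  refine ⟨f', hf'M, ⟨?_, ?_⟩, heq' ▸ hmem'⟩
  · intro w hw
    exact ⟨t, z, by rw [honly' w hw, heq']⟩
  · intro a b b' hab hab'
    have h1 := honly' _ hab
    have h2 := honly' _ hab'
    rw [heq'] at h1 h2
    obtain ⟨-, rfl⟩ := ZFSet.pair_inj.1 h1
    obtain ⟨-, rfl⟩ := ZFSet.pair_inj.1 h2
    rfl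

/-- A strongly generic condition is strongly semigeneric, for `M ≺ H_θ`. -/
lemma stronglySemiproperWrt_of_stronglyProperWrt {θ ω1 P le : ZFSet} {M : Set ZFSet}
    (hωθ : ZFSet.omega ∈ θ) (hM : ElemSub M (HClass θ))
    (hsp : StronglyProperWrt P le M) : StronglySemiproperWrt ω1 P le M := by
  intro p hp hpM
  obtain ⟨p', h1, h2, hgen⟩ := hsp p hp hpM
  refine ⟨p', h1, h2, ?_⟩
  intro q hq hqle
  obtain ⟨t, htP, htM, hcomp⟩ := hgen q hq hqle
  have hHull : Hull M t ⊆ M := hull_subset hM htM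
  refine ⟨t, htP, ?_, fun r hr hrP hrle => hcomp r (hHull hr) hrP hrle⟩
  intro z _
  exact ⟨fun h => hHull h, fun hzM => mem_hull hωθ hM htM hzM⟩

end Formulas

/-! #### Closure points below ω₁ -/

section Club

open ZFSet

lemma exists_closure_point {ω1 : ZFSet} (hω1 : IsOmega1 ω1) (G : List ZFSet → ZFSet)
    {α : ZFSet} (hα : α ∈ ω1.toSet) :
    ∃ δ, δ ∈ ω1.toSet ∧ α ∈ δ ∧ ∅ ∈ δ ∧
      ∀ x, ClosMem G δ.toSet x → x ∈ ω1.toSet → x ∈ δ := by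
  classical
  have hstep : ∀ β ∈ ω1.toSet, ∃ γ ∈ ω1.toSet, β ∈ γ ∧
      ∀ x, ClosMem G β.toSet x → x ∈ ω1.toSet → x ∈ γ := by
    intro β hβ
    have h1 : {x | ClosMem G β.toSet x ∧ x ∈ ω1.toSet}.Countable :=
      (closMem_countable (hω1.2.2 β hβ)).mono (fun x hx => hx.1)
    have hcnt : ({x | ClosMem G β.toSet x ∧ x ∈ ω1.toSet} ∪ {β} : Set ZFSet).Countable :=
      h1.union (Set.countable_singleton β)
    have hsub : ({x | ClosMem G β.toSet x ∧ x ∈ ω1.toSet} ∪ {β} : Set ZFSet) ⊆ ω1.toSet := by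
      rintro x (⟨-, hx⟩ | rfl)
      · exact hx
      · exact hβ
    obtain ⟨γ, hγ, hb⟩ := bounded_of_countable hω1 hcnt hsub
    exact ⟨γ, hγ, hb β (Or.inr rfl), fun x h1' h2' => hb x (Or.inl ⟨h1', h2'⟩)⟩
  choose nxt hnxt1 hnxt2 hnxt3 using hstep
  let g : ZFSet → ZFSet := fun β => if h : β ∈ ω1.toSet then nxt β h else ∅
  have hg1 : ∀ β (h : β ∈ ω1.toSet), g β ∈ ω1.toSet := fun β h => by
    simp only [g, dif_pos h]; exact hnxt1 β h
  have hg2 : ∀ β (h : β ∈ ω1.toSet), β ∈ g β := fun β h => by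
    simp only [g, dif_pos h]; exact hnxt2 β h
  have hg3 : ∀ β (h : β ∈ ω1.toSet), ∀ x, ClosMem G β.toSet x → x ∈ ω1.toSet → x ∈ g β :=
    fun β h => by simp only [g, dif_pos h]; exact hnxt3 β h
  set γ : ℕ → ZFSet := fun n => g^[n] (insert α α) with hγ
  have hγs : ∀ n, γ (n + 1) = g (γ n) := fun n => Function.iterate_succ_apply' g n _
  have hα1 : insert α α ∈ ω1 := succ_mem_omega1 hω1 ((zmem_toSet _ _).1 hα)
  have hγω : ∀ n, γ n ∈ ω1.toSet := by
    intro n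
    induction n with
    | zero => exact (zmem_toSet _ _).2 hα1
    | succ k IH => rw [hγs]; exact hg1 _ IH
  have hmem : ∀ n, γ n ∈ γ (n + 1) := fun n => by rw [hγs]; exact hg2 _ (hγω n)
  have hsub1 : ∀ n, (γ n).toSet ⊆ (γ (n + 1)).toSet := by
    intro n u hu
    have hord : IsOrd (γ (n + 1)) :=
      isOrd_of_mem hω1.1 ((zmem_toSet _ _).1 (hγω (n + 1)))
    exact (zmem_toSet _ _).2 (hord.1 _ (hmem n) ((zmem_toSet _ _).1 hu))
  have hchain : ∀ m n, m ≤ n → (γ m).toSet ⊆ (γ n).toSet := by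
    intro m n h
    induction n with
    | zero => rw [Nat.le_zero.1 h]
    | succ k IH =>
      rcases Nat.le_succ_iff_eq_or_le.1 h with rfl | h'
      · exact Set.Subset.rfl
      · exact (IH h').trans (hsub1 k)
  set δ : ZFSet := ⋃₀ ZFSet.range γ with hδ
  have hmemδ : ∀ {x : ZFSet}, x ∈ δ ↔ ∃ n, x ∈ γ n := by
    intro x
    rw [hδ, ZFSet.mem_sUnion]
    constructor
    · rintro ⟨z, hz, hx⟩
      obtain ⟨n, rfl⟩ := ZFSet.mem_range.1 hz
      exact ⟨n, hx⟩
    · rintro ⟨n, hx⟩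
      exact ⟨γ n, ZFSet.mem_range.2 ⟨n, rfl⟩, hx⟩
  have hδto : δ.toSet = ⋃ n, (γ n).toSet := by
    ext u
    simp only [zmem_toSet, Set.mem_iUnion, hmemδ]
  have hδord : IsOrd δ := by
    constructor
    · intro u hu w hw
      obtain ⟨n, hn⟩ := hmemδ.1 hu
      have : IsOrd (γ n) := isOrd_of_mem hω1.1 ((zmem_toSet _ _).1 (hγω n))
      exact hmemδ.2 ⟨n, this.1 u hn hw⟩
    · intro u hu
      obtain ⟨n, hn⟩ := hmemδ.1 hu
      exact (isOrd_of_mem (isOrd_of_mem hω1.1 ((zmem_toSet _ _).1 (hγω n))) hn).1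
  have hδcnt : δ.toSet.Countable := by
    rw [hδto]
    exact Set.countable_iUnion fun n => hω1.2.2 _ (hγω n)
  have hδω : δ ∈ ω1 := by
    rcases triZ δ hδord ω1 hω1.1 with h | h | h
    · exact h
    · exact absurd (h ▸ hδcnt) hω1.2.1
    · exfalso
      obtain ⟨n, hn⟩ := hmemδ.1 h
      exact ZFSet.mem_irrefl ω1 (hω1.1.1 _ ((zmem_toSet _ _).1 (hγω n)) hn)
  have hγ0 : γ 0 = insert α α := rfl
  refine ⟨δ, (zmem_toSet _ _).2 hδω, ?_, ?_, ?_⟩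
  · exact hmemδ.2 ⟨0, by rw [hγ0]; exact ZFSet.mem_insert_iff.2 (Or.inl rfl)⟩
  · refine hmemδ.2 ⟨0, ?_⟩
    rw [hγ0]
    by_cases he : α = ∅
    · rw [he]; exact ZFSet.mem_insert_iff.2 (Or.inl rfl)
    · exact ZFSet.mem_insert_iff.2 (Or.inr
        (empty_mem_of_ord (isOrd_of_mem hω1.1 ((zmem_toSet _ _).1 hα)) he))
  · intro x hx hxω
    rw [hδto] at hx
    obtain ⟨n, hn⟩ := closMem_iUnion (fun n => (γ n).toSet)
      (fun i j => ⟨max i j, hchain _ _ (le_max_left i j), hchain _ _ (le_max_right i j)⟩) hx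
    have : x ∈ γ (n + 1) := by
      rw [hγs]
      exact hg3 (γ n) (hγω n) x hn hxω
    exact hmemδ.2 ⟨n + 1, this⟩

end Club
end Aux

/-- every strongly proper forcing is strongly ssp. -/
theorem stronglySSP_of_stronglyProper
    (ω1 P le : ZFSet.{0}) (hω1 : IsOmega1 ω1) (hF : IsForcing P le)
    (h : StronglyProper P le) : StronglySSP ω1 P le := by
  intro θ hreg hGg S hS F' hF'
  obtain ⟨F₀, hF₀mem, hF₀club⟩ := h θ hreg hGg
  have hωθ : ZFSet.omega ∈ θ := hreg.2.1
  classical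
  set G : List ZFSet → ZFSet := fun l =>
    match l with
    | [] => ∅
    | [_] => {∅}
    | x :: _ :: l' => if x = ∅ then F₀ l' else F' l' with hGdef
  have hGmem : ∀ l, G l ∈ HClass θ := by
    intro l
    match l with
    | [] => exact empty_mem_hclass hωθ
    | [x] => exact singleton_mem_hclass hωθ (empty_mem_hclass hωθ)
    | x :: y :: l' =>
      show (if x = ∅ then F₀ l' else F' l') ∈ HClass θ
      split_ifs
      · exact hF₀mem l'
      · exact hF' l'
  set C : ZFSet := ZFSet.sep
    (fun d => ∅ ∈ d ∧ ∀ x, ClosMem G d.toSet x → x ∈ ω1.toSet → x ∈ d) ω1 with hCdef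
  have hCmem : ∀ {d : ZFSet}, d ∈ C ↔ d ∈ ω1 ∧ ∅ ∈ d ∧
      ∀ x, ClosMem G d.toSet x → x ∈ ω1.toSet → x ∈ d := by
    intro d
    rw [hCdef, ZFSet.mem_sep]
  have hclub : IsClub ω1 C := by
    refine ⟨?_, ?_, ?_⟩
    · rw [ZFSet.subset_def]
      intro z hz
      exact (hCmem.1 hz).1
    · intro α hα
      obtain ⟨δ, hδω, hαδ, hδ0, hδclos⟩ := exists_closure_point hω1 G hα
      exact ⟨δ, hCmem.2 ⟨(zmem_toSet _ _).1 hδω, hδ0, hδclos⟩, hαδ⟩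
    · rintro δ hδ ⟨β₀, hβ₀⟩ hunb
      have hδm : δ ∈ ω1 := (zmem_toSet _ _).1 hδ
      have hδord : IsOrd δ := isOrd_of_mem hω1.1 hδm
      refine hCmem.2 ⟨hδm, ?_, ?_⟩
      · exact empty_mem_of_ord hδord
          (fun he => ZFSet.notMem_empty β₀ (he ▸ hβ₀))
      · intro x hx hxω
        haveI : Nonempty {β : ZFSet // β ∈ C ∧ β ∈ δ} := by
          obtain ⟨β, hβC, -, hβδ⟩ := hunb β₀ ((zmem_toSet _ _).2 hβ₀)
          exact ⟨⟨β, hβC, hβδ⟩⟩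
        have hcov : δ.toSet = ⋃ i : {β : ZFSet // β ∈ C ∧ β ∈ δ}, (i.1).toSet := by
          ext u
          constructor
          · intro hu
            obtain ⟨β, hβC, huβ, hβδ⟩ := hunb u hu
            exact Set.mem_iUnion.2 ⟨⟨β, hβC, hβδ⟩, (zmem_toSet _ _).2 huβ⟩
          · intro hu
            obtain ⟨i, hu⟩ := Set.mem_iUnion.1 hu
            exact (zmem_toSet _ _).2
              (hδord.1 i.1 i.2.2 ((zmem_toSet _ _).1 hu))
        have hdir : ∀ i j : {β : ZFSet // β ∈ C ∧ β ∈ δ},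
            ∃ k : {β : ZFSet // β ∈ C ∧ β ∈ δ},
              (i.1).toSet ⊆ (k.1).toSet ∧ (j.1).toSet ⊆ (k.1).toSet := by
          intro i j
          have hio : IsOrd i.1 := isOrd_of_mem hδord i.2.2
          have hjo : IsOrd j.1 := isOrd_of_mem hδord j.2.2
          rcases triZ i.1 hio j.1 hjo with hij | hij | hij
          · exact ⟨j, fun u hu => (zmem_toSet _ _).2
              (hjo.1 _ hij ((zmem_toSet _ _).1 hu)), Set.Subset.rfl⟩
          · exact ⟨j, by rw [hij], Set.Subset.rfl⟩
          · exact ⟨i, Set.Subset.rfl, fun u hu => (zmem_toSet _ _).2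
              (hio.1 _ hij ((zmem_toSet _ _).1 hu))⟩
        rw [hcov] at hx
        obtain ⟨i, hi⟩ := closMem_iUnion _ hdir hx
        have hxi : x ∈ i.1 := (hCmem.1 i.2.1).2.2 x hi hxω
        exact hδord.1 i.1 i.2.2 hxi
  obtain ⟨δ, hδS, hδC⟩ := hS.2 C (Set.mem_univ C) hclub
  obtain ⟨hδω1, hδ0, hδclos⟩ := hCmem.1 hδC
  set M : Set ZFSet := {x | ClosMem G δ.toSet x} with hMdef
  have hMcnt : M.Countable := closMem_countable (hω1.2.2 δ ((zmem_toSet _ _).2 hδω1))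
  have hMsub : M ⊆ HClass θ := by
    intro x hx
    induction hx with
    | base hb =>
      exact mem_omega1_hclass hω1 hωθ (hω1.1.1 δ hδω1 ((zmem_toSet _ _).1 hb))
    | step l _ _ => exact hGmem l
  have hGclosed : ClosedUnder M G := fun l hl => ClosMem.step l hl
  have hempty : (∅ : ZFSet) ∈ M := hGclosed [] (by simp)
  have hsingl : ({∅} : ZFSet) ∈ M := hGclosed [∅] (by
    intro x hx
    rw [List.mem_singleton] at hx
    rw [hx]
    exact hempty)
  have hF₀closed : ClosedUnder M F₀ := by
    intro l hl
    have hh := hGclosed (∅ :: ∅ :: l) (by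
      intro x hx
      rcases List.mem_cons.1 hx with rfl | hx'
      · exact hempty
      rcases List.mem_cons.1 hx' with rfl | hx''
      · exact hempty
      · exact hl x hx'')
    have e : G (∅ :: ∅ :: l) = F₀ l := by
      show (if (∅ : ZFSet) = ∅ then F₀ l else F' l) = F₀ l
      rw [if_pos rfl]
    rwa [e] at hh
  have hF'closed : ClosedUnder M F' := by
    intro l hl
    have hh := hGclosed (({∅} : ZFSet) :: ∅ :: l) (by
      intro x hx
      rcases List.mem_cons.1 hx with rfl | hx'
      · exact hsingl
      rcases List.mem_cons.1 hx' with rfl | hx''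
      · exact hempty
      · exact hl x hx'')
    have hne : ({∅} : ZFSet) ≠ ∅ := by
      intro he
      have hmm : (∅ : ZFSet) ∈ ({∅} : ZFSet) := ZFSet.mem_singleton.2 rfl
      rw [he] at hmm
      exact ZFSet.notMem_empty _ hmm
    have e : G (({∅} : ZFSet) :: ∅ :: l) = F' l := by
      show (if ({∅} : ZFSet) = ∅ then F₀ l else F' l) = F' l
      rw [if_neg hne]
    rwa [e] at hh
  obtain ⟨hc, helem, hsp⟩ := hF₀club M hMcnt hMsub hF₀closed
  have hssp : StronglySemiproperWrt ω1 P le M :=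
    stronglySemiproperWrt_of_stronglyProperWrt hωθ helem hsp
  have hδeq : DeltaIs ω1 M δ := by
    refine ⟨isOrd_of_mem hω1.1 hδω1, ?_⟩
    intro z
    constructor
    · intro hz
      exact ⟨(zmem_toSet _ _).2 (hω1.1.1 δ hδω1 hz),
        ClosMem.base ((zmem_toSet _ _).2 hz)⟩
    · rintro ⟨h1, h2⟩
      exact hδclos z h2 h1
  exact ⟨M, ⟨⟨hc, helem, hssp⟩, δ, hδeq, hδS⟩, hMcnt, hMsub, hF'closed⟩
end CcPaper
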